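/- Let F be a finite forest. Then χ_{vi,1}(F) = 1 if Δ(F) = 0, χ_{vi,1}(F) = 4 if Δ(F) = 1, and χ_{vi,1}(F) = Δ(F) + 2 if Δ(F) ≥ 2. -/

import Mathlib

open SimpleGraph

variable {V : Type*}

/-- An *incidence* of `G`: a pair `(v, e)` where `e` is an edge of `G` and `v ∈ e`. -/
abbrev Inc (G : SimpleGraph V) : Type _ :=
  {p : V × Sym2 V // p.2 ∈ G.edgeSet ∧ p.1 ∈ p.2}

/-- The elements to be colored in a vi-simultaneous coloring: vertices together with
incidences. -/
abbrev VIElem (G : SimpleGraph V) : Type _ := V ⊕ Inc G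

/-- Adjacency between elements of `V(G) ∪ I(G)`: two vertices are adjacent when they are
adjacent in `G`; a vertex `u` and an incidence `(w, f)` are adjacent when `u ∈ f`; two
distinct incidences `(v, e)`, `(w, f)` are adjacent when `v = w`, or `e = f`, or
`{v, w} = e`, or `{v, w} = f`. -/
def VIAdj (G : SimpleGraph V) : VIElem G → VIElem G → Prop
  | Sum.inl u, Sum.inl w => G.Adj u w
  | Sum.inl u, Sum.inr i => u ∈ i.1.2
  | Sum.inr i, Sum.inl u => u ∈ i.1.2
  | Sum.inr i, Sum.inr j => i ≠ j ∧
      (i.1.1 = j.1.1 ∨ i.1.2 = j.1.2 ∨ s(i.1.1, j.1.1) = i.1.2 ∨ s(i.1.1, j.1.1) = j.1.2)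

/-- A vi-simultaneous proper `k`-coloring of `G`: adjacent or incident elements of
`V(G) ∪ I(G)` receive distinct colors. -/
def IsVIColoring (G : SimpleGraph V) {k : ℕ} (c : VIElem G → Fin k) : Prop :=
  ∀ a b, VIAdj G a b → c a ≠ c b

/-- The vi-simultaneous chromatic number `χ_vi(G)`: the least `k` admitting a
vi-simultaneous proper `k`-coloring. -/
noncomputable def chiVI (G : SimpleGraph V) : ℕ :=
  sInf {k | ∃ c : VIElem G → Fin k, IsVIColoring G c}

/-- `I₂(v)`: the set of second incidences of a vertex `v`, i.e. incidences `(u, e)` with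
`e = {u, v}` and `u ≠ v`. -/
def I2 (G : SimpleGraph V) (v : V) : Set (Inc G) :=
  {i | i.1.1 ≠ v ∧ i.1.2 = s(i.1.1, v)}

/-- A vi-simultaneous `(k, s)`-coloring: a vi-simultaneous proper `k`-coloring in which at
most `s` distinct colors appear on `I₂(v)` for every vertex `v`. -/
def IsVISColoring (G : SimpleGraph V) (s : ℕ) {k : ℕ} (c : VIElem G → Fin k) : Prop :=
  IsVIColoring G c ∧ ∀ v : V, ((fun i => c (Sum.inr i)) '' I2 G v).ncard ≤ s

/-- `χ_{vi,s}(G)`: the least `k` admitting a vi-simultaneous `(k, s)`-coloring. -/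
noncomputable def chiVIS (G : SimpleGraph V) (s : ℕ) : ℕ :=
  sInf {k | ∃ c : VIElem G → Fin k, IsVISColoring G s c}

/-- The maximum degree `Δ(G)` of a finite graph. -/
noncomputable def maxDeg [Fintype V] (G : SimpleGraph V) : ℕ :=
  Finset.univ.sup fun v => (G.neighborSet v).ncard

/-!
Lower bounds: the ends of an edge and its two incidences are pairwise adjacent, which forces
four colors; a vertex `v` of degree `Δ`, its `Δ` incidences `(v, vx)` and one second incidence
`(u, uv)` are pairwise adjacent, which forces `Δ + 2`.

Upper bound: color each vertex `v` by `a v` and every incidence `(u, uv)` by `f v`, so that each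
`I₂(v)` is monochromatic. The conditions on `(a, f)` making this proper are local, and a forest
with an edge has a leaf `v` with neighbor `w`; a valid pair for `F - vw` extends to `F` by
recoloring `v`: `f v` must avoid `a w`, `f w` and the `f`-colors of the other at most `Δ - 1`
neighbors of `w`, and `a v` must avoid `a w`, `f w`, `f v`. So `max 4 (Δ + 2)` colors suffice.
-/

section

variable {G : SimpleGraph V} {k : ℕ}

noncomputable def Inc.other (i : Inc G) : V := Sym2.Mem.other i.2.2

lemma Inc.mk_other (i : Inc G) : s(i.1.1, i.other) = i.1.2 := Sym2.other_spec i.2.2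

lemma Inc.adj_other (i : Inc G) : G.Adj i.1.1 i.other := by
  rw [← mem_edgeSet, i.mk_other]
  exact i.2.1

def Inc.ofAdj {x y : V} (h : G.Adj x y) : Inc G := ⟨(x, s(x, y)), h, Sym2.mem_mk_left x y⟩

lemma Inc.other_ofAdj {x y : V} (h : G.Adj x y) : (Inc.ofAdj h).other = y :=
  Sym2.congr_right.mp (Inc.mk_other _)

lemma Inc.exists_eq_ofAdj (i : Inc G) : ∃ x y, ∃ h : G.Adj x y, i = Inc.ofAdj h :=
  ⟨_, _, i.adj_other, Subtype.ext (Prod.ext rfl i.mk_other.symm)⟩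

noncomputable def viColoringOf (G : SimpleGraph V) (a f : V → Fin k) : VIElem G → Fin k
  | .inl u => a u
  | .inr i => f i.other

structure IsVIColorPair (G : SimpleGraph V) (a f : V → Fin k) : Prop where
  ne : ∀ u, a u ≠ f u
  adj : ∀ ⦃u v⦄, G.Adj u v → a u ≠ a v ∧ a u ≠ f v ∧ f u ≠ f v
  injOn : ∀ u, Set.InjOn f (G.neighborSet u)

namespace IsVIColorPair

variable {a f : V → Fin k}

lemma ne_of_mem (h : IsVIColorPair G a f) {u : V} {i : Inc G} (hu : u ∈ i.1.2) :
    a u ≠ f i.other := by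
  rw [← i.mk_other, Sym2.mem_iff] at hu
  rcases hu with rfl | rfl
  · exact (h.adj i.adj_other).2.1
  · exact h.ne _

lemma ne_of_viAdj (h : IsVIColorPair G a f) {i j : Inc G} (hij : VIAdj G (.inr i) (.inr j)) :
    f i.other ≠ f j.other := by
  obtain ⟨x, y, hxy, rfl⟩ := i.exists_eq_ofAdj
  obtain ⟨z, w, hzw, rfl⟩ := j.exists_eq_ofAdj
  rw [Inc.other_ofAdj, Inc.other_ofAdj]
  obtain ⟨hne, hcases⟩ := hij
  simp only [Inc.ofAdj, ne_eq, Subtype.mk.injEq, Prod.mk.injEq, Sym2.eq_iff, true_and,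
    and_true] at hne hcases
  rcases hcases with rfl | (⟨rfl, rfl⟩ | ⟨rfl, rfl⟩) | (rfl | ⟨rfl, rfl⟩) | ⟨rfl, rfl⟩ | rfl
  · exact fun hf => hne ⟨rfl, .inl ⟨rfl, h.injOn x hxy hzw hf⟩⟩
  · exact absurd ⟨rfl, .inl ⟨rfl, rfl⟩⟩ hne
  · exact (h.adj hxy).2.2.symm
  · exact (h.adj hzw).2.2
  · exact absurd rfl hxy.ne
  · exact absurd rfl hzw.ne
  · exact (h.adj hxy).2.2.symm

lemma isVISColoring (h : IsVIColorPair G a f) : IsVISColoring G 1 (viColoringOf G a f) := by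
  refine ⟨?_, fun v => ?_⟩
  · rintro (u | i) (w | j) huw
    · exact (h.adj huw).1
    · exact h.ne_of_mem huw
    · exact (h.ne_of_mem huw).symm
    · exact h.ne_of_viAdj huw
  · have hsub : (fun i => viColoringOf G a f (.inr i)) '' I2 G v ⊆ {f v} := by
      rintro _ ⟨i, ⟨-, he⟩, rfl⟩
      exact congrArg f (Sym2.congr_right.mp (i.mk_other.trans he))
    exact (Set.ncard_le_ncard hsub).trans (Set.ncard_singleton _).le

end IsVIColorPair

lemma isVISColoring_of_forall_not_adj (hG : ∀ u v, ¬G.Adj u v) (s : ℕ) (c : VIElem G → Fin k) :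
    IsVISColoring G s c := by
  have : IsEmpty (Inc G) := ⟨fun i => hG _ _ i.adj_other⟩
  refine ⟨?_, fun v => ?_⟩
  · rintro (u | i) (w | j) huw
    · exact absurd huw (hG u w)
    all_goals exact isEmptyElim ‹Inc G›
  · simp [Set.image_eq_empty.mpr (Set.eq_empty_of_isEmpty _)]

lemma IsVIColoring.card_le {c : VIElem G → Fin k} (hc : IsVIColoring G c) {ι : Type*}
    (g : ι → VIElem G) (hg : Pairwise fun i j => VIAdj G (g i) (g j)) : Nat.card ι ≤ k := by
  simpa using Nat.card_le_card_of_injective (c ∘ g) fun i j hij =>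
    by_contra fun hne => hc _ _ (hg hne) hij

lemma IsVIColoring.four_le {c : VIElem G → Fin k} (hc : IsVIColoring G c) {u v : V}
    (huv : G.Adj u v) : 4 ≤ k := by
  have := hc.card_le ![.inl u, .inl v, .inr (Inc.ofAdj huv), .inr (Inc.ofAdj huv.symm)] ?_
  · simpa using this
  intro i j hij
  fin_cases i <;> fin_cases j <;> simp [VIAdj, Inc.ofAdj, huv, huv.symm, huv.ne, huv.ne'] at hij ⊢

lemma IsVIColoring.ncard_neighborSet_add_two_le [Finite V] {c : VIElem G → Fin k}
    (hc : IsVIColoring G c) {v : V} (hv : (G.neighborSet v).Nonempty) :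
    (G.neighborSet v).ncard + 2 ≤ k := by
  obtain ⟨u, hu⟩ := hv
  let g : Option (Option (G.neighborSet v)) → VIElem G
    | none => .inl v
    | some none => .inr (Inc.ofAdj (G.adj_symm hu))
    | some (some x) => .inr (Inc.ofAdj x.2)
  have := hc.card_le g ?_
  · simp at this
    omega
  have hx : ∀ x : G.neighborSet v, (x : V) ≠ v := fun x => (G.ne_of_adj x.2).symm
  rintro (_ | _ | x) (_ | _ | y) hne <;>
    simp [g, VIAdj, Inc.ofAdj, hx, hu.ne, hu.ne', Subtype.ext_iff] at hne ⊢
  exact hne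

theorem SimpleGraph.IsAcyclic.exists_adj_forall_adj_eq [Finite V] (hG : G.IsAcyclic) {u₀ w₀ : V}
    (h₀ : G.Adj u₀ w₀) : ∃ v w, G.Adj v w ∧ ∀ x, G.Adj v x → x = w := by
  have : Nonempty V := ⟨u₀⟩
  obtain ⟨u, v, p, hp, hmax⟩ := Walk.exists_isPath_forall_isPath_length_le_length G
  have hnil : ¬p.Nil := by
    rw [Walk.not_nil_iff_lt_length]
    exact hmax _ _ _ h₀.isPath_toWalk
  refine ⟨u, _, p.adj_snd hnil, fun x hx =>
    hG.eq_snd_of_adj_start hp hx (by_contra fun hxp => ?_)⟩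
  simpa using hmax _ _ (.cons hx.symm p) (hp.cons hxp)

lemma Set.exists_notMem_of_ncard_lt {α : Type*} {s : Set α} (hs : s.ncard < Nat.card α) :
    ∃ x, x ∉ s := by
  by_contra! h
  simp [Set.eq_univ_of_forall h] at hs

lemma exists_leaf_colors [Finite V] (a f : V → Fin k) {v w : V} (hvw : G.Adj v w) (hk : 4 ≤ k)
    (hw : (G.neighborSet w).ncard + 2 ≤ k) :
    ∃ na nf : Fin k, (na ≠ a w ∧ na ≠ f w ∧ na ≠ nf) ∧
      (nf ≠ a w ∧ nf ≠ f w ∧ ∀ x ∈ G.neighborSet w \ {v}, f x ≠ nf) := by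
  obtain ⟨nf, hnf⟩ :=
      Set.exists_notMem_of_ncard_lt (s := {a w, f w} ∪ f '' (G.neighborSet w \ {v})) <|
    calc _ ≤ ({a w, f w} : Set (Fin k)).ncard + (f '' (G.neighborSet w \ {v})).ncard :=
          Set.ncard_union_le _ _
      _ ≤ 2 + ((G.neighborSet w).ncard - 1) := by
          gcongr
          · grw [Set.ncard_insert_le, Set.ncard_singleton]
          · exact (Set.ncard_image_le (Set.toFinite _)).trans
              (Set.ncard_sdiff_singleton_of_mem (s := G.neighborSet w) hvw.symm).le
      _ < Nat.card (Fin k) := by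
          have := (Set.ncard_pos (s := G.neighborSet w)).mpr ⟨v, hvw.symm⟩
          rw [Nat.card_fin]
          omega
  obtain ⟨na, hna⟩ := Set.exists_notMem_of_ncard_lt (s := {a w, f w, nf}) <|
    calc _ ≤ 3 := by grw [Set.ncard_insert_le, Set.ncard_insert_le, Set.ncard_singleton]
      _ < Nat.card (Fin k) := by rw [Nat.card_fin]; omega
  simp only [Set.mem_union, Set.mem_insert_iff, Set.mem_singleton_iff, Set.mem_image, not_or,
    not_exists, not_and] at hnf hna
  exact ⟨na, nf, hna, hnf.1.1, hnf.1.2, hnf.2⟩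

lemma IsVIColorPair.update_leaf [DecidableEq V] {a f : V → Fin k} {v w : V} (hvw : G.Adj v w)
    (hleaf : ∀ x, G.Adj v x → x = w) (h : IsVIColorPair (G.deleteEdges {s(v, w)}) a f)
    {na nf : Fin k} (hna : na ≠ a w ∧ na ≠ f w ∧ na ≠ nf)
    (hnf : nf ≠ a w ∧ nf ≠ f w ∧ ∀ x ∈ G.neighborSet w \ {v}, f x ≠ nf) :
    IsVIColorPair G (Function.update a v na) (Function.update f v nf) := by
  have hG' {x y : V} (hxy : G.Adj x y) (hx : x ≠ v) (hy : y ≠ v) :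
      (G.deleteEdges {s(v, w)}).Adj x y := by
    simp [hxy, hx, hy]
  have hv {x : V} (hx : G.Adj x v) : x = w := hleaf x hx.symm
  have hwv : w ≠ v := hvw.ne'
  constructor
  · intro u
    rcases eq_or_ne u v with rfl | hu
    · simpa using hna.2.2
    · simpa [hu] using h.ne u
  · intro x y hxy
    rcases eq_or_ne x v with rfl | hx
    · obtain rfl := hleaf y hxy
      simp [hwv, hna.1, hna.2.1, hnf.2.1]
    rcases eq_or_ne y v with rfl | hy
    · obtain rfl := hv hxy
      simp [hx, Ne.symm hna.1, Ne.symm hnf.1, Ne.symm hnf.2.1]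
    simpa [hx, hy] using h.adj (hG' hxy hx hy)
  · intro u x hx y hy hxy
    rcases eq_or_ne u v with rfl | hu
    · exact (hleaf x hx).trans (hleaf y hy).symm
    by_cases hxv : x = v <;> by_cases hyv : y = v
    · exact hxv.trans hyv.symm
    · have huw : u = w := hv (hxv ▸ hx)
      simp only [hxv, Function.update_self, Function.update_of_ne hyv] at hxy
      exact absurd hxy.symm (hnf.2.2 y ⟨huw ▸ hy, hyv⟩)
    · have huw : u = w := hv (hyv ▸ hy)
      simp only [hyv, Function.update_self, Function.update_of_ne hxv] at hxy
      exact absurd hxy (hnf.2.2 x ⟨huw ▸ hx, hxv⟩)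
    · simp only [Function.update_of_ne hxv, Function.update_of_ne hyv] at hxy
      exact h.injOn u (hG' hx hu hxv) (hG' hy hu hyv) hxy

theorem SimpleGraph.IsAcyclic.exists_isVIColorPair [Finite V] (hG : G.IsAcyclic) (hk : 4 ≤ k)
    (hdeg : ∀ v, (G.neighborSet v).ncard + 2 ≤ k) : ∃ a f : V → Fin k, IsVIColorPair G a f := by
  classical
  induction G using WellFoundedLT.induction with | ind G ih
  by_cases hE : ∃ u w, G.Adj u w
  · obtain ⟨u₀, w₀, h₀⟩ := hE
    obtain ⟨v, w, hvw, hleaf⟩ := hG.exists_adj_forall_adj_eq h₀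
    have hlt : G.deleteEdges {s(v, w)} < G :=
      (deleteEdges_le _).lt_of_not_ge fun h => by simpa using h hvw
    obtain ⟨a, f, h⟩ := ih _ hlt (hG.anti (deleteEdges_le _)) fun x =>
      le_trans (by gcongr; exact Set.toFinite _) (hdeg x)
    obtain ⟨na, nf, hna, hnf⟩ := exists_leaf_colors a f hvw hk (hdeg w)
    exact ⟨_, _, h.update_leaf hvw hleaf hna hnf⟩
  · push Not at hE
    exact ⟨fun _ => ⟨0, by omega⟩, fun _ => ⟨1, by omega⟩,
      ⟨fun _ => by simp [Fin.ext_iff], fun u v huv => absurd huv (hE u v),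
        fun u _ hx => absurd hx (hE u _)⟩⟩

end

lemma ncard_neighborSet_le_maxDeg [Fintype V] (G : SimpleGraph V) (v : V) :
    (G.neighborSet v).ncard ≤ maxDeg G :=
  Finset.le_sup (f := fun v => (G.neighborSet v).ncard) (Finset.mem_univ v)

lemma exists_ncard_neighborSet_eq_maxDeg [Fintype V] [Nonempty V] (G : SimpleGraph V) :
    ∃ v, (G.neighborSet v).ncard = maxDeg G := by
  obtain ⟨v, -, hv⟩ := Finset.exists_mem_eq_sup Finset.univ Finset.univ_nonempty
    fun v => (G.neighborSet v).ncard
  exact ⟨v, hv.symm⟩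

lemma chiVIS_eq_of {G : SimpleGraph V} {s k : ℕ}
    (hex : ∃ c : VIElem G → Fin k, IsVISColoring G s c)
    (hle : ∀ m (c : VIElem G → Fin m), IsVIColoring G c → k ≤ m) : chiVIS G s = k :=
  le_antisymm (Nat.sInf_le hex) (le_csInf ⟨k, hex⟩ fun m ⟨c, hc, _⟩ => hle m c hc)

theorem chiVIS_one_forest_general {V : Type*} [Fintype V] [Nonempty V]
    (F : SimpleGraph V) (hF : F.IsAcyclic) :
    (maxDeg F = 0 → chiVIS F 1 = 1) ∧
    (maxDeg F = 1 → chiVIS F 1 = 4) ∧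
    (2 ≤ maxDeg F → chiVIS F 1 = maxDeg F + 2) := by
  obtain ⟨v, hv⟩ := exists_ncard_neighborSet_eq_maxDeg F
  have hdeg := ncard_neighborSet_le_maxDeg F
  have hvE : maxDeg F ≠ 0 → (F.neighborSet v).Nonempty := fun h =>
    Set.nonempty_of_ncard_ne_zero (hv ▸ h)
  refine ⟨fun h0 => ?_, fun h1 => ?_, fun h2 => ?_⟩
  · have hE (u w : V) : ¬F.Adj u w := fun huw =>
      ((Set.ncard_pos (s := F.neighborSet u)).mpr ⟨w, huw⟩).ne' (Nat.le_zero.mp (h0 ▸ hdeg u))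
    exact chiVIS_eq_of ⟨fun _ => 0, isVISColoring_of_forall_not_adj hE _ _⟩
      fun m c _ => Fin.pos (c (.inl v))
  · obtain ⟨a, f, h⟩ := hF.exists_isVIColorPair (k := 4) le_rfl fun u => by have := hdeg u; omega
    obtain ⟨w, hw⟩ := hvE (by omega)
    exact chiVIS_eq_of ⟨_, h.isVISColoring⟩ fun m c hc => hc.four_le hw
  · obtain ⟨a, f, h⟩ := hF.exists_isVIColorPair (k := maxDeg F + 2) (by omega) fun u => by
      have := hdeg u; omega
    exact chiVIS_eq_of ⟨_, h.isVISColoring⟩ fun m c hc =>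
      hv ▸ hc.ncard_neighborSet_add_two_le (hvE (by omega))

/-- Let `F` be a finite (nonempty) forest. Then `χ_{vi,1}(F) = 1` if
`Δ(F) = 0`, `χ_{vi,1}(F) = 4` if `Δ(F) = 1`, and `χ_{vi,1}(F) = Δ(F) + 2` if
`Δ(F) ≥ 2`. -/
theorem chiVIS_one_forest {V : Type*} [Fintype V] [DecidableEq V] [Nonempty V]
    (F : SimpleGraph V) (hF : F.IsAcyclic) :
    (maxDeg F = 0 → chiVIS F 1 = 1) ∧
    (maxDeg F = 1 → chiVIS F 1 = 4) ∧
    (2 ≤ maxDeg F → chiVIS F 1 = maxDeg F + 2) :=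
  chiVIS_one_forest_general F hF
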